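/- Let a, v, α, γ ∈ ℝ and let f : ℝ → ℝ be a C⁴ function satisfying f''''(w) − f''(w) = −a·(exp(−w) − 1) for every w ∈ ℝ, with f(0) = 0 and f'(0) = −v. If there exists M ≥ 0 such that |f(w) − (γ·w²/2 + α·w)| ≤ M for all w ≥ 0, then γ = −a and f(w) = (a·w/2)·(exp(−w) − w − 1) + (α + v + a/2)·(exp(−w) + w − 1) − v·w for all w ∈ ℝ. -/

import Mathlib

/-!
Subtracting the particular solution `a/2 · w e^{-w} - a w²/2` (the factor `w` comes from the
resonance of the forcing `e^{-w}` with the characteristic root `-1`) leaves `g'''' = g''`.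
Then `g''' + g''` and `g''' - g''` solve `u' = u` and `u' = -u`, so
`g = A e^w + B e^{-w} + C w + D`. Boundedness of `f - (γ w²/2 + α w)` on `[0, ∞)` kills the
growing terms one order at a time (`e^w`, then `w²`, then `w`), giving `A = 0`, `γ = -a`,
`C = α`; the conditions at `0` determine `B` and `D`.
-/

open Real Filter Asymptotics

theorem eq_add_sub_of_hasDerivAt {u U u' : ℝ → ℝ} (hu : ∀ x, HasDerivAt u (u' x) x)
    (hU : ∀ x, HasDerivAt U (u' x) x) (x : ℝ) : u x = U x + (u 0 - U 0) := by
  have hd (y : ℝ) : HasDerivAt (fun y => u y - U y) 0 y := sub_self (u' y) ▸ (hu y).sub (hU y)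
  have := is_const_of_deriv_eq_zero (fun y => (hd y).differentiableAt) (fun y => (hd y).deriv) x 0
  linarith

theorem eq_mul_exp_of_hasDerivAt {u : ℝ → ℝ} {c : ℝ} (hu : ∀ x, HasDerivAt u (c * u x) x)
    (x : ℝ) : u x = u 0 * exp (c * x) := by
  have hd (y : ℝ) : HasDerivAt (fun y => u y * exp (-(c * y))) 0 y :=
    ((hu y).mul (((hasDerivAt_id y).const_mul c).neg.exp)).congr_deriv
      (by simp only [id_eq, Pi.neg_apply]; ring)
  have := is_const_of_deriv_eq_zero (fun y => (hd y).differentiableAt) (fun y => (hd y).deriv) x 0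
  simp only [mul_zero, neg_zero, exp_zero, mul_one] at this
  rw [← this, mul_assoc, ← exp_add, neg_add_cancel, exp_zero, mul_one]

theorem exists_eq_exp_add_exp_neg_add_affine {g g₁ g₂ g₃ : ℝ → ℝ}
    (h₀ : ∀ x, HasDerivAt g (g₁ x) x) (h₁ : ∀ x, HasDerivAt g₁ (g₂ x) x)
    (h₂ : ∀ x, HasDerivAt g₂ (g₃ x) x) (h₃ : ∀ x, HasDerivAt g₃ (g₂ x) x) :
    ∃ A B C D : ℝ, ∀ x, g x = A * exp x + B * exp (-x) + C * x + D ∧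
      g₁ x = A * exp x - B * exp (-x) + C := by
  have hsum := eq_mul_exp_of_hasDerivAt (u := fun x => g₃ x + g₂ x) (c := 1)
    fun x => ((h₃ x).add (h₂ x)).congr_deriv (by ring)
  have hdiff := eq_mul_exp_of_hasDerivAt (u := fun x => g₃ x - g₂ x) (c := -1)
    fun x => ((h₃ x).sub (h₂ x)).congr_deriv (by ring)
  simp only [one_mul, neg_one_mul] at hsum hdiff
  set A := (g₃ 0 + g₂ 0) / 2
  set B := -(g₃ 0 - g₂ 0) / 2
  have hg₂ (x : ℝ) : g₂ x = A * exp x + B * exp (-x) := by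
    linear_combination (hsum x - hdiff x) / 2
  have hg₁ := eq_add_sub_of_hasDerivAt h₁ (U := fun x => A * exp x - B * exp (-x))
    fun x => (((hasDerivAt_exp x).const_mul A).sub ((hasDerivAt_neg x).exp.const_mul B)).congr_deriv
      (by rw [hg₂]; ring)
  set C := g₁ 0 - (A * exp 0 - B * exp (-0))
  have hg := eq_add_sub_of_hasDerivAt h₀ (U := fun x => A * exp x + B * exp (-x) + C * x)
    fun x => ((((hasDerivAt_exp x).const_mul A).add ((hasDerivAt_neg x).exp.const_mul B)).add
      ((hasDerivAt_id x).const_mul C)).congr_deriv (by rw [hg₁]; ring)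
  exact ⟨A, B, C, _, fun x => ⟨hg x, hg₁ x⟩⟩

theorem eq_zero_of_const_mul_add_isBigO {α : Type*} {l : Filter α} {g h k : α → ℝ} {c : ℝ}
    (hg : ∃ᶠ x in l, g x ≠ 0) (hh : h =o[l] g) (hk : k =o[l] g)
    (hO : (fun x => c * g x + h x) =O[l] k) : c = 0 := by
  by_contra hc
  have : (fun x => c * g x) =o[l] g := ((hO.trans_isLittleO hk).sub hh).congr_left (by simp)
  exact isLittleO_irrefl hg ((isLittleO_const_mul_left_iff hc).1 this)

theorem exp_quadratic_coeffs_eq_zero_of_isBigO_one {A b c : ℝ}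
    (h : (fun x => A * exp x + b * x ^ 2 + c * x) =O[atTop] (fun _ => (1 : ℝ))) :
    A = 0 ∧ b = 0 ∧ c = 0 := by
  have hpow (n : ℕ) : ∃ᶠ x : ℝ in atTop, x ^ n ≠ 0 :=
    (eventually_gt_atTop 0).frequently.mono fun x hx => pow_ne_zero n hx.ne'
  obtain rfl : A = 0 :=
    eq_zero_of_const_mul_add_isBigO (.of_forall fun x => (exp_pos x).ne')
      (((isLittleO_pow_exp_atTop (n := 2)).const_mul_left b).add
        ((isLittleO_pow_exp_atTop (n := 1)).const_mul_left c))
      (by simpa using isLittleO_pow_exp_atTop (n := 0)) (h.congr_left fun x => by ring)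
  obtain rfl : b = 0 :=
    eq_zero_of_const_mul_add_isBigO (hpow 2)
      ((isLittleO_pow_pow_atTop_of_lt one_lt_two).const_mul_left c)
      (by simp) (h.congr_left fun x => by ring)
  exact ⟨rfl, rfl, eq_zero_of_const_mul_add_isBigO (hpow 1) (isLittleO_zero _ _)
      (by simpa using isLittleO_pow_pow_atTop_of_lt (𝕜 := ℝ) one_pos)
      (h.congr_left fun x => by ring)⟩

theorem ContDiff.hasDerivAt_iteratedDeriv {𝕜 F : Type*} [NontriviallyNormedField 𝕜]
    [NormedAddCommGroup F] [NormedSpace 𝕜 F] {f : 𝕜 → F} {n : WithTop ℕ∞}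
    (hf : ContDiff 𝕜 n f) {m : ℕ} (hm : m < n) (x : 𝕜) :
    HasDerivAt (iteratedDeriv m f) (iteratedDeriv (m + 1) f x) x := by
  rw [iteratedDeriv_succ]
  exact (hf.differentiable_iteratedDeriv m hm x).hasDerivAt

noncomputable def particularSolution (a : ℝ) : ℕ → ℝ → ℝ
  | 0, x => a / 2 * x * exp (-x) - a * x ^ 2 / 2
  | 1, x => a / 2 * (1 - x) * exp (-x) - a * x
  | 2, x => a / 2 * (x - 2) * exp (-x) - a
  | 3, x => a / 2 * (3 - x) * exp (-x)
  | _, x => a / 2 * (x - 4) * exp (-x)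

theorem hasDerivAt_particularSolution (a : ℝ) {k : ℕ} (hk : k < 4) (x : ℝ) :
    HasDerivAt (particularSolution a k) (particularSolution a (k + 1) x) x := by
  have hexp := (hasDerivAt_neg x).exp
  interval_cases k
  · exact ((((hasDerivAt_id x).const_mul (a / 2)).mul hexp).sub
      (((hasDerivAt_pow 2 x).const_mul a).div_const 2)).congr_deriv
      (by simp only [particularSolution, id_eq]; ring)
  · exact (((((hasDerivAt_id x).const_sub 1).const_mul (a / 2)).mul hexp).sub
      ((hasDerivAt_id x).const_mul a)).congr_deriv (by simp only [particularSolution, id_eq]; ring)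
  · exact ((((hasDerivAt_id x).sub_const 2).const_mul (a / 2)).mul hexp).sub_const a
      |>.congr_deriv (by simp only [particularSolution, id_eq]; ring)
  · exact (((hasDerivAt_id x).const_sub 3).const_mul (a / 2)).mul hexp
      |>.congr_deriv (by simp only [particularSolution, id_eq]; ring)

theorem particularSolution_four_sub_two (a x : ℝ) :
    particularSolution a 4 x - particularSolution a 2 x = -a * (exp (-x) - 1) := by
  simp only [particularSolution]
  ring

theorem exists_eq_of_iteratedDeriv_four_sub_two {a : ℝ} {f : ℝ → ℝ} (hf : ContDiff ℝ 4 f)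
    (hode : ∀ x, iteratedDeriv 4 f x - iteratedDeriv 2 f x = -a * (exp (-x) - 1)) :
    ∃ A B C D : ℝ, ∀ x,
      f x = a / 2 * x * exp (-x) - a * x ^ 2 / 2 + A * exp x + B * exp (-x) + C * x + D ∧
      deriv f x = a / 2 * (1 - x) * exp (-x) - a * x + A * exp x - B * exp (-x) + C := by
  have hg (k : ℕ) (hk : k < 4) (x : ℝ) : HasDerivAt
      (fun x => iteratedDeriv k f x - particularSolution a k x)
      (iteratedDeriv (k + 1) f x - particularSolution a (k + 1) x) x :=
    (hf.hasDerivAt_iteratedDeriv (mod_cast hk) x).sub (hasDerivAt_particularSolution a hk x)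
  obtain ⟨A, B, C, D, hsol⟩ := exists_eq_exp_add_exp_neg_add_affine (hg 0 (by norm_num))
    (hg 1 (by norm_num)) (hg 2 (by norm_num)) fun x => (hg 3 (by norm_num) x).congr_deriv
      (by linarith [hode x, particularSolution_four_sub_two a x])
  refine ⟨A, B, C, D, fun x => ?_⟩
  simp only [iteratedDeriv_zero, zero_add, iteratedDeriv_one, particularSolution] at hsol
  constructor <;> linarith [hsol x]

theorem coeffs_eq_of_abs_sub_quadratic_le {a A B C D α γ M : ℝ} {f : ℝ → ℝ}
    (hf : ∀ x,
      f x = a / 2 * x * exp (-x) - a * x ^ 2 / 2 + A * exp x + B * exp (-x) + C * x + D)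
    (hM : ∀ x, 0 ≤ x → |f x - (γ * x ^ 2 / 2 + α * x)| ≤ M) :
    A = 0 ∧ γ = -a ∧ C = α := by
  have hE : (fun x => f x - (γ * x ^ 2 / 2 + α * x)) =O[atTop] (fun _ => (1 : ℝ)) :=
    .of_bound M (by filter_upwards [eventually_ge_atTop 0] with x hx; simpa using hM x hx)
  have hR : Tendsto (fun x => B * exp (-x) + a / 2 * (x * exp (-x)) + D) atTop (nhds D) := by
    simpa using ((tendsto_exp_neg_atTop_nhds_zero.const_mul B).add
      ((tendsto_pow_mul_exp_neg_atTop_nhds_zero 1).const_mul (a / 2))).add_const D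
  obtain ⟨hA, hγ, hC⟩ := exp_quadratic_coeffs_eq_zero_of_isBigO_one (A := A)
    (b := -(a + γ) / 2) (c := C - α)
    ((hE.sub (hR.isBigO_one ℝ)).congr_left fun x => by rw [hf]; ring)
  exact ⟨hA, by linarith, by linarith⟩

/-- Second-order matching at x = 1 for the inhomogeneous layer equation
    f'''' - f'' = -a·(e^{-w} - 1) with f(0) = 0, f'(0) = -v: boundedness of
    f(w) - (γ·w²/2 + α·w) on [0, ∞) forces γ = -a and determines f. -/
theorem stmt_9 (a v α γ : ℝ) (f : ℝ → ℝ) (hf : ContDiff ℝ 4 f)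
    (hode : ∀ w : ℝ, iteratedDeriv 4 f w - iteratedDeriv 2 f w
      = -a * (Real.exp (-w) - 1))
    (h0 : f 0 = 0) (h1 : deriv f 0 = -v)
    (hbdd : ∃ M : ℝ, 0 ≤ M ∧ ∀ w : ℝ, 0 ≤ w → |f w - (γ * w ^ 2 / 2 + α * w)| ≤ M) :
    γ = -a ∧ ∀ w : ℝ,
      f w = (a * w / 2) * (Real.exp (-w) - w - 1)
        + (α + v + a / 2) * (Real.exp (-w) + w - 1) - v * w := by
  obtain ⟨A, B, C, D, hsol⟩ := exists_eq_of_iteratedDeriv_four_sub_two hf hode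
  obtain ⟨M, -, hM⟩ := hbdd
  obtain ⟨rfl, hγ, hC⟩ := coeffs_eq_of_abs_sub_quadratic_le (fun x => (hsol x).1) hM
  have hD : D = -B := by
    have := (hsol 0).1
    simp only [h0, mul_zero, zero_mul, neg_zero, exp_zero] at this
    linarith
  have hB : B = α + v + a / 2 := by
    have := (hsol 0).2
    simp only [h1, sub_zero, mul_zero, neg_zero, exp_zero] at this
    linarith
  refine ⟨hγ, fun w => ?_⟩
  rw [(hsol w).1]
  linear_combination (exp (-w) - 1) * hB + w * hC + hD
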